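/- In the separability setting, adding transmissions of no-flow edges to the conditioning set does not change conditional mutual information: if for all 𝓔' ⊆ 𝓔, I(M ; X(𝓢') | X(𝓔')) = 0 for a subset 𝓢' ⊆ 𝓔, then for any edge R ∉ 𝓢' and any 𝓡' ⊆ 𝓔 \ ({R} ∪ 𝓢'), I(M ; X(R) | X(𝓡'), X(𝓢')) = I(M ; X(R) | X(𝓡')). -/
import Mathlib


open MeasureTheory ProbabilityTheory

/-- Shannon entropy of a finite-valued random variable. -/
noncomputable def entropy {Ω α : Type*} [MeasurableSpace Ω] [Fintype α]
    (μ : Measure Ω) (X : Ω → α) : ℝ :=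
  ∑ x : α, Real.negMulLog (μ (X ⁻¹' {x})).toReal

/-- Mutual information `I(X ; Y)` of finite-valued random variables. -/
noncomputable def mutualInfo {Ω α β : Type*} [MeasurableSpace Ω] [Fintype α] [Fintype β]
    (μ : Measure Ω) (X : Ω → α) (Y : Ω → β) : ℝ :=
  entropy μ X + entropy μ Y - entropy μ (fun ω => (X ω, Y ω))

/-- Conditional mutual information `I(X ; Y | Z)` of finite-valued random variables. -/
noncomputable def condMutualInfo {Ω α β γ : Type*} [MeasurableSpace Ω]
    [Fintype α] [Fintype β] [Fintype γ]
    (μ : Measure Ω) (X : Ω → α) (Y : Ω → β) (Z : Ω → γ) : ℝ :=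
  entropy μ (fun ω => (X ω, Z ω)) + entropy μ (fun ω => (Y ω, Z ω))
    - entropy μ (fun ω => (X ω, Y ω, Z ω)) - entropy μ Z

/-- The joint random variable `X(𝓔')` of the transmissions on a subset `S` of edges. -/
def joint {Ω E α : Type*} (X : E → Ω → α) (S : Finset E) : Ω → (S → α) :=
  fun ω e => X e.1 ω

/-- Entropy is invariant under composition with an injective map. -/
lemma entropy_comp {Ω α γ : Type*} [MeasurableSpace Ω] [Fintype α] [Fintype γ]
    (μ : Measure Ω) (W : Ω → α) (f : α → γ) (hf : Function.Injective f) :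
    entropy μ (fun ω => f (W ω)) = entropy μ W := by
  classical
  unfold entropy
  rw [← Finset.sum_subset (Finset.subset_univ (Finset.univ.image f)) (by
    intro y _ hy
    have hemp : (fun ω => f (W ω)) ⁻¹' {y} = ∅ := by
      ext ω
      simp only [Set.mem_preimage, Set.mem_singleton_iff, Set.mem_empty_iff_false, iff_false]
      intro h
      exact hy (Finset.mem_image.mpr ⟨W ω, Finset.mem_univ _, h⟩)
    rw [hemp]
    simp [Real.negMulLog_zero])]
  rw [Finset.sum_image (fun a _ b _ h => hf h)]
  refine Finset.sum_congr rfl (fun x _ => ?_)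
  have hset : (fun ω => f (W ω)) ⁻¹' {f x} = W ⁻¹' {x} := by
    ext ω; simp [hf.eq_iff]
  rw [hset]

/-- Transmissions of no-flow edges are invisible in conditioning sets: if `𝓢'` jointly
carries no conditional information about `M` under any conditioning, then adding
`X(𝓢')` to the conditioning set leaves conditional mutual information unchanged. -/
theorem no_flow_edges_invisible_in_conditioning
    {Ω E α β : Type*} [MeasurableSpace Ω] [Fintype E] [DecidableEq E] [Fintype α] [Fintype β]
    (μ : Measure Ω) [IsProbabilityMeasure μ] (M : Ω → β) (X : E → Ω → α)
    (S' : Finset E)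
    (hS' : ∀ C : Finset E, condMutualInfo μ M (joint X S') (joint X C) = 0)
    (r : E) (hr : r ∉ S') (R' : Finset E) (hR' : R' ⊆ Finset.univ \ insert r S') :
    condMutualInfo μ M (X r) (joint X (R' ∪ S')) =
      condMutualInfo μ M (X r) (joint X R') := by
  classical
  have h1 := hS' R'
  have h2 := hS' (insert r R')
  unfold condMutualInfo at h1 h2 ⊢
  -- restriction maps
  set U : Finset E := R' ∪ S' with hU
  let πS : (↥U → α) → (↥S' → α) :=
    fun h e => h ⟨e.1, Finset.mem_union_right _ e.2⟩
  let πR : (↥U → α) → (↥R' → α) :=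
    fun h e => h ⟨e.1, Finset.mem_union_left _ e.2⟩
  have hinjU : Function.Injective (fun h : (↥U → α) => (πS h, πR h)) := by
    intro h1 h2 hh
    funext e
    obtain ⟨e, he⟩ := e
    rcases Finset.mem_union.mp he with h | h
    · exact congrFun (congrArg Prod.snd hh) ⟨e, h⟩
    · exact congrFun (congrArg Prod.fst hh) ⟨e, h⟩
  let πr : (↥(insert r R') → α) → α := fun h => h ⟨r, Finset.mem_insert_self r R'⟩
  let πR' : (↥(insert r R') → α) → (↥R' → α) :=
    fun h e => h ⟨e.1, Finset.mem_insert_of_mem e.2⟩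
  have hinjI : Function.Injective
      (fun h : (↥(insert r R') → α) => (πr h, πR' h)) := by
    intro h1 h2 hh
    funext e
    obtain ⟨e, he⟩ := e
    rcases Finset.mem_insert.mp he with h | h
    · subst h
      exact congrArg Prod.fst hh
    · exact congrFun (congrArg Prod.snd hh) ⟨e, h⟩
  -- conversions to canonical entropies
  have f1inj : Function.Injective (fun p : β × (↥U → α) => (p.1, πS p.2, πR p.2)) := by
    intro ⟨p1, p2⟩ ⟨q1, q2⟩ hpq
    simp only [Prod.mk.injEq] at hpq ⊢
    exact ⟨hpq.1, hinjU (Prod.ext hpq.2.1 hpq.2.2)⟩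
  have k1 : entropy μ (fun ω => (M ω, joint X S' ω, joint X R' ω))
      = entropy μ (fun ω => (M ω, joint X U ω)) :=
    entropy_comp μ (fun ω => (M ω, joint X U ω))
      (fun p : β × (↥U → α) => (p.1, πS p.2, πR p.2)) f1inj
  have f2inj : Function.Injective (fun p : α × (↥U → α) => (πS p.2, p.1, πR p.2)) := by
    intro ⟨p1, p2⟩ ⟨q1, q2⟩ hpq
    simp only [Prod.mk.injEq] at hpq ⊢
    exact ⟨hpq.2.1, hinjU (Prod.ext hpq.1 hpq.2.2)⟩
  have k2 : entropy μ (fun ω => (joint X S' ω, X r ω, joint X R' ω))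
      = entropy μ (fun ω => (X r ω, joint X U ω)) :=
    entropy_comp μ (fun ω => (X r ω, joint X U ω))
      (fun p : α × (↥U → α) => (πS p.2, p.1, πR p.2)) f2inj
  have f3inj : Function.Injective
      (fun p : β × α × (↥U → α) => (p.1, πS p.2.2, p.2.1, πR p.2.2)) := by
    intro ⟨p1, p2, p3⟩ ⟨q1, q2, q3⟩ hpq
    simp only [Prod.mk.injEq] at hpq ⊢
    exact ⟨hpq.1, hpq.2.2.1, hinjU (Prod.ext hpq.2.1 hpq.2.2.2)⟩
  have k3 : entropy μ (fun ω => (M ω, joint X S' ω, X r ω, joint X R' ω))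
      = entropy μ (fun ω => (M ω, X r ω, joint X U ω)) :=
    entropy_comp μ (fun ω => (M ω, X r ω, joint X U ω))
      (fun p : β × α × (↥U → α) => (p.1, πS p.2.2, p.2.1, πR p.2.2)) f3inj
  have k4 : entropy μ (fun ω => (joint X S' ω, joint X R' ω))
      = entropy μ (joint X U) :=
    entropy_comp μ (joint X U) (fun h : (↥U → α) => (πS h, πR h)) hinjU
  have f5inj : Function.Injective
      (fun p : β × (↥(insert r R') → α) => (p.1, πr p.2, πR' p.2)) := by
    intro ⟨p1, p2⟩ ⟨q1, q2⟩ hpq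
    simp only [Prod.mk.injEq] at hpq ⊢
    exact ⟨hpq.1, hinjI (Prod.ext hpq.2.1 hpq.2.2)⟩
  have k5 : entropy μ (fun ω => (M ω, X r ω, joint X R' ω))
      = entropy μ (fun ω => (M ω, joint X (insert r R') ω)) :=
    entropy_comp μ (fun ω => (M ω, joint X (insert r R') ω))
      (fun p : β × (↥(insert r R') → α) => (p.1, πr p.2, πR' p.2)) f5inj
  have f6inj : Function.Injective
      (fun p : (↥S' → α) × (↥(insert r R') → α) => (p.1, πr p.2, πR' p.2)) := by
    intro ⟨p1, p2⟩ ⟨q1, q2⟩ hpq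
    simp only [Prod.mk.injEq] at hpq ⊢
    exact ⟨hpq.1, hinjI (Prod.ext hpq.2.1 hpq.2.2)⟩
  have k6 : entropy μ (fun ω => (joint X S' ω, X r ω, joint X R' ω))
      = entropy μ (fun ω => (joint X S' ω, joint X (insert r R') ω)) :=
    entropy_comp μ (fun ω => (joint X S' ω, joint X (insert r R') ω))
      (fun p : (↥S' → α) × (↥(insert r R') → α) => (p.1, πr p.2, πR' p.2)) f6inj
  have f7inj : Function.Injective
      (fun p : β × (↥S' → α) × (↥(insert r R') → α) =>
        (p.1, p.2.1, πr p.2.2, πR' p.2.2)) := by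
    intro ⟨p1, p2, p3⟩ ⟨q1, q2, q3⟩ hpq
    simp only [Prod.mk.injEq] at hpq ⊢
    exact ⟨hpq.1, hpq.2.1, hinjI (Prod.ext hpq.2.2.1 hpq.2.2.2)⟩
  have k7 : entropy μ (fun ω => (M ω, joint X S' ω, X r ω, joint X R' ω))
      = entropy μ (fun ω => (M ω, joint X S' ω, joint X (insert r R') ω)) :=
    entropy_comp μ (fun ω => (M ω, joint X S' ω, joint X (insert r R') ω))
      (fun p : β × (↥S' → α) × (↥(insert r R') → α) =>
        (p.1, p.2.1, πr p.2.2, πR' p.2.2)) f7inj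
  have k8 : entropy μ (fun ω => (X r ω, joint X R' ω))
      = entropy μ (joint X (insert r R')) :=
    entropy_comp μ (joint X (insert r R'))
      (fun h : (↥(insert r R') → α) => (πr h, πR' h)) hinjI
  rw [← k1, ← k2, ← k3, ← k4]
  rw [← k5, ← k6, ← k7, ← k8] at h2
  linarith
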